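/- Let θ̂_u and θ̂_b' be square-integrable real-valued random variables on a probability space with E[θ̂_u] = θ₀, E[θ̂_b'] = θ₀, Var(θ̂_u) = σ_u² > 0, Var(θ̂_b') = σ_b², Cov(θ̂_u, θ̂_b') = σ_bu, and σ_u² + σ_b² − 2σ_bu > 0. For each k, let θ̂_b⁽ᵏ⁾ = θ̂_b' + μ_k where (μ_k) is a sequence of reals with μ_k → ∞, and define λ̂_k = (σ_u² − σ_bu)/((θ̂_u − θ̂_b⁽ᵏ⁾)² + σ_u² + σ_b² − 2σ_bu) and θ̂_λ̂⁽ᵏ⁾ = λ̂_k·θ̂_b⁽ᵏ⁾ + (1 − λ̂_k)·θ̂_u. Then lim_{k→∞} E[(θ̂_λ̂⁽ᵏ⁾ − θ₀)²] = σ_u², i.e., the mean-squared error of the combination estimator converges to that of the unbiased estimator as the bias grows without bound. -/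

import Mathlib

/-!
Writing `λ̂_k` for the weight and `d_k = θ̂_u − θ̂_b⁽ᵏ⁾`, the error of the combination is
`(θ̂_u − θ₀) − λ̂_k d_k`, and `λ̂_k d_k = c d_k / (d_k² + v)` with `c = σ_u² − σ_bu`
and `v = σ_u² + σ_b² − 2σ_bu > 0`.
By AM–GM this correction is bounded by `|c| / (2√v)` uniformly in `ω` and `k`, and it tends to `0`
pointwise because `d_k → −∞`. Dominated convergence, with the square-integrable dominating function
`(|θ̂_u − θ₀| + |c| / (2√v))²`, gives `E[(θ̂_λ̂⁽ᵏ⁾ − θ₀)²] → E[(θ̂_u − θ₀)²] = σ_u²`.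
-/

open MeasureTheory ProbabilityTheory Filter Topology

lemma abs_mul_div_sq_add_le (c d : ℝ) {v : ℝ} (hv : 0 < v) :
    |c * d / (d ^ 2 + v)| ≤ |c| / (2 * √v) := by
  have hden : 0 < d ^ 2 + v := by positivity
  have amgm : 2 * √v * |d| ≤ d ^ 2 + v := by
    nlinarith [sq_nonneg (|d| - √v), Real.sq_sqrt hv.le, sq_abs d]
  rw [abs_div, abs_of_pos hden, abs_mul, div_le_div_iff₀ hden (by positivity)]
  nlinarith [mul_le_mul_of_nonneg_left amgm (abs_nonneg c)]

lemma tendsto_mul_div_sq_add_cocompact (c : ℝ) {v : ℝ} (hv : 0 ≤ v) :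
    Tendsto (fun d : ℝ => c * d / (d ^ 2 + v)) (cocompact ℝ) (𝓝 0) := by
  have habs : Tendsto (fun d : ℝ => |d|) (cocompact ℝ) atTop := tendsto_norm_cocompact_atTop
  refine squeeze_zero_norm' ?_ ((tendsto_const_nhds (x := |c|)).div_atTop habs)
  filter_upwards [habs.eventually_gt_atTop 0] with d hd
  have hden : 0 < d ^ 2 + v := add_pos_of_pos_of_nonneg (by rw [← sq_abs]; positivity) hv
  rw [Real.norm_eq_abs, abs_div, abs_of_pos hden, abs_mul, div_le_div_iff₀ hden hd]
  nlinarith [sq_abs d, abs_nonneg c]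

lemma tendsto_integral_sub_sq_of_abs_le {Ω ι : Type*} [MeasurableSpace Ω] {P : Measure Ω}
    [IsFiniteMeasure P] {l : Filter ι} [l.IsCountablyGenerated] {X : Ω → ℝ} {g : ι → Ω → ℝ}
    {M : ℝ} (hX : MemLp X 2 P) (hg_meas : ∀ k, AEStronglyMeasurable (g k) P)
    (hg_le : ∀ k ω, |g k ω| ≤ M) (hg_lim : ∀ᵐ ω ∂P, Tendsto (fun k => g k ω) l (𝓝 0)) :
    Tendsto (fun k => ∫ ω, (X ω - g k ω) ^ 2 ∂P) l (𝓝 (∫ ω, X ω ^ 2 ∂P)) := by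
  have hX_meas := hX.aestronglyMeasurable
  refine tendsto_integral_filter_of_dominated_convergence (fun ω => (|X ω| + M) ^ 2)
    (Eventually.of_forall fun k => (hX_meas.sub (hg_meas k)).pow 2)
    (Eventually.of_forall fun k => Eventually.of_forall fun ω => ?_)
    (hX.abs.add (memLp_const M)).integrable_sq ?_
  · have h : |X ω - g k ω| ≤ |X ω| + M := (abs_sub _ _).trans (by linarith [hg_le k ω])
    rw [Real.norm_eq_abs, abs_pow]
    exact pow_le_pow_left₀ (abs_nonneg _) h 2
  · filter_upwards [hg_lim] with ω hω
    simpa using (tendsto_const_nhds (x := X ω)).sub hω |>.pow 2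

theorem mse_converges_unbounded_bias_general
    {Ω : Type*} [MeasurableSpace Ω] (P : Measure Ω) [IsProbabilityMeasure P]
    (θu θb' : Ω → ℝ) (θ₀ σu2 σb2 σbu : ℝ)
    (hθu : MemLp θu 2 P) (hθb' : MemLp θb' 2 P)
    (hEu : ∫ ω, θu ω ∂P = θ₀)
    (hVu : variance θu P = σu2)
    (hv : σu2 + σb2 - 2 * σbu > 0)
    (μ : ℕ → ℝ) (hμ : Tendsto μ atTop atTop) :
    Tendsto
      (fun k => ∫ ω,
        (((σu2 - σbu) / ((θu ω - (θb' ω + μ k)) ^ 2 + σu2 + σb2 - 2 * σbu))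
            * (θb' ω + μ k)
          + (1 - (σu2 - σbu) / ((θu ω - (θb' ω + μ k)) ^ 2 + σu2 + σb2 - 2 * σbu))
            * θu ω
          - θ₀) ^ 2 ∂P)
      atTop (nhds σu2) := by
  set v := σu2 + σb2 - 2 * σbu
  let corr : ℝ → ℝ := fun d => (σu2 - σbu) * d / (d ^ 2 + v)
  have hcorr_cont : Continuous corr := by fun_prop (disch := intro d; positivity)
  have hdiff_meas : ∀ k, AEStronglyMeasurable (fun ω => θu ω - (θb' ω + μ k)) P := fun k =>
    hθu.aestronglyMeasurable.sub (hθb'.aestronglyMeasurable.add aestronglyMeasurable_const)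
  have hdiff_lim : ∀ ω, Tendsto (fun k => θu ω - (θb' ω + μ k)) atTop (cocompact ℝ) := fun ω =>
    (tendsto_atBot_add_const_left _ _ (tendsto_neg_atTop_atBot.comp
      (tendsto_atTop_add_const_left _ _ hμ))).mono_right atBot_le_cocompact
  have hsecond_moment : ∫ ω, (θu ω - θ₀) ^ 2 ∂P = σu2 := by
    rw [← hVu, variance_eq_integral hθu.aestronglyMeasurable.aemeasurable, hEu]
  have hlim := tendsto_integral_sub_sq_of_abs_le (X := fun ω => θu ω - θ₀)
    (hθu.sub (memLp_const θ₀))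
    (fun k => hcorr_cont.comp_aestronglyMeasurable (hdiff_meas k))
    (fun k ω => abs_mul_div_sq_add_le (σu2 - σbu) (θu ω - (θb' ω + μ k)) hv)
    (ae_of_all _ fun ω => (tendsto_mul_div_sq_add_cocompact _ hv.le).comp (hdiff_lim ω))
  rw [hsecond_moment] at hlim
  refine hlim.congr fun k => integral_congr_ae (ae_of_all _ fun ω => ?_)
  simp only [corr, v]
  ring

/-- As the bias `μ_k → ∞`, the MSE of the combination estimator
`θ̂_λ̂⁽ᵏ⁾ = λ̂_k·(θ̂_b' + μ_k) + (1 − λ̂_k)·θ̂_u` converges to `σ_u²`, the MSE of the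
unbiased estimator. -/
theorem mse_converges_unbounded_bias
    {Ω : Type*} [MeasurableSpace Ω] (P : Measure Ω) [IsProbabilityMeasure P]
    (θu θb' : Ω → ℝ) (θ₀ σu2 σb2 σbu : ℝ)
    (hθu : MemLp θu 2 P) (hθb' : MemLp θb' 2 P)
    (hEu : ∫ ω, θu ω ∂P = θ₀) (hEb' : ∫ ω, θb' ω ∂P = θ₀)
    (hVu : variance θu P = σu2) (hσu2pos : 0 < σu2)
    (hVb : variance θb' P = σb2)
    (hCov : ∫ ω, (θu ω - θ₀) * (θb' ω - θ₀) ∂P = σbu)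
    (hv : σu2 + σb2 - 2 * σbu > 0)
    (μ : ℕ → ℝ) (hμ : Tendsto μ atTop atTop) :
    Tendsto
      (fun k => ∫ ω,
        (((σu2 - σbu) / ((θu ω - (θb' ω + μ k)) ^ 2 + σu2 + σb2 - 2 * σbu))
            * (θb' ω + μ k)
          + (1 - (σu2 - σbu) / ((θu ω - (θb' ω + μ k)) ^ 2 + σu2 + σb2 - 2 * σbu))
            * θu ω
          - θ₀) ^ 2 ∂P)
      atTop (nhds σu2) :=
  mse_converges_unbounded_bias_general P θu θb' θ₀ σu2 σb2 σbu hθu hθb' hEu hVu hv μ hμ
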